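/- arXiv:1912.04230 — 6 statements merged into one kernel-verified Lean document; each statement's English description precedes it below -/
import Mathlib

section
/- Let F : ℝ^p → ℝ be differentiable, μ-strongly convex and L-smooth (with 0 < μ ≤ L), and let x* be its unique minimizer. Then for every step-size α with 0 < α ≤ 1/L and every x ∈ ℝ^p, ‖x − α∇F(x) − x*‖ ≤ (1 − μα)‖x − x*‖. -/
/-!
Subtracting `μ/2 ‖·‖²` from `F` leaves a convex function `h` whose first-order Taylor error is at
most `(L - μ)/2 ‖y - x‖²` (descent lemma). Comparing `h` at `x` and at `y - t (∇h y - ∇h x)`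
yields co-coercivity, `‖∇h x - ∇h y‖² ≤ (L - μ) ⟪∇h x - ∇h y, x - y⟫`. The difference of two
gradient steps is `(1 - μα)(x - y) - α(∇h x - ∇h y)`; expanding its square, co-coercivity and
`α(L + μ) ≤ 2` let the cross term absorb the last one. As `∇F x* = 0`, the theorem is the case
`y = x*`.
-/

open RealInnerProductSpace

section

variable {E : Type*} [NormedAddCommGroup E] [InnerProductSpace ℝ E]

theorem IsLocalMin.gradient_eq_zero [CompleteSpace E] {f : E → ℝ} {a : E} (h : IsLocalMin f a) :
    gradient f a = 0 := by
  simp [gradient, h.fderiv_eq_zero]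

theorem HasGradientAt.hasDerivAt_comp_add_smul [CompleteSpace E] {f : E → ℝ} {a v f' : E} {t : ℝ}
    (hf : HasGradientAt f f' (a + t • v)) :
    HasDerivAt (fun s : ℝ => f (a + s • v)) ⟪f', v⟫ t := by
  have hline : HasDerivAt (fun s : ℝ => a + s • v) v t := by
    simpa using ((hasDerivAt_id t).smul_const v).const_add a
  exact (hasGradientAt_iff_hasFDerivAt.mp hf).comp_hasDerivAt t hline

theorem le_add_inner_gradient_add_of_lipschitz_gradient [CompleteSpace E] {f : E → ℝ} {L : ℝ}
    (hf : Differentiable ℝ f) (hL : ∀ x y, ‖gradient f x - gradient f y‖ ≤ L * ‖x - y‖)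
    (x y : E) :
    f y ≤ f x + ⟪gradient f x, y - x⟫ + L / 2 * ‖y - x‖ ^ 2 := by
  set v := y - x
  set φ : ℝ → ℝ := fun t => f (x + t • v) - t * ⟪gradient f x, v⟫ - L / 2 * t ^ 2 * ‖v‖ ^ 2
  have hφ : ∀ t, HasDerivAt φ
      (⟪gradient f (x + t • v), v⟫ - ⟪gradient f x, v⟫ - L * t * ‖v‖ ^ 2) t := by
    intro t
    refine ((((hf _).hasGradientAt.hasDerivAt_comp_add_smul).sub
      ((hasDerivAt_id t).mul_const _)).sub
        (((hasDerivAt_pow 2 t).const_mul (L / 2)).mul_const _)).congr_deriv ?_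
    simp only [Nat.cast_ofNat]; ring
  have hφ' : ∀ t ∈ interior (Set.Icc (0 : ℝ) 1),
      ⟪gradient f (x + t • v), v⟫ - ⟪gradient f x, v⟫ - L * t * ‖v‖ ^ 2 ≤ 0 := by
    intro t ht
    rw [interior_Icc] at ht
    rw [← inner_sub_left, sub_nonpos]
    calc ⟪gradient f (x + t • v) - gradient f x, v⟫
        ≤ ‖gradient f (x + t • v) - gradient f x‖ * ‖v‖ := real_inner_le_norm _ _
      _ ≤ L * ‖x + t • v - x‖ * ‖v‖ := by gcongr; exact hL _ _
      _ = L * t * ‖v‖ ^ 2 := by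
        rw [add_sub_cancel_left, norm_smul, Real.norm_of_nonneg ht.1.le]; ring
  have hanti : AntitoneOn φ (Set.Icc 0 1) :=
    antitoneOn_of_hasDerivWithinAt_nonpos (convex_Icc 0 1)
      (HasDerivAt.continuousOn fun t _ => hφ t)
      (fun t _ => (hφ t).hasDerivWithinAt) hφ'
  have h10 := hanti (by norm_num) (by norm_num) zero_le_one
  simp only [φ, v, one_smul, zero_smul, add_zero, add_sub_cancel, one_mul, zero_mul, sub_zero,
    one_pow, ne_eq, OfNat.ofNat_ne_zero, not_false_eq_true, zero_pow, mul_zero] at h10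
  linarith

theorem sub_sub_inner_sub_half_mul_norm_sq (f : E → ℝ) (g : E → E) (c : ℝ) (x y : E) :
    (f y - c / 2 * ‖y‖ ^ 2) - (f x - c / 2 * ‖x‖ ^ 2) - ⟪g x - c • x, y - x⟫
      = f y - f x - ⟪g x, y - x⟫ - c / 2 * ‖y - x‖ ^ 2 := by
  rw [norm_sub_sq_real, inner_sub_left, real_inner_smul_left, inner_sub_right x,
    real_inner_self_eq_norm_sq, real_inner_comm y x]
  ring

theorem inner_sub_nonneg_of_affine_minorants {h : E → ℝ} {g : E → E}
    (hlow : ∀ x y, h x + ⟪g x, y - x⟫ ≤ h y) (x y : E) :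
    0 ≤ ⟪g y - g x, y - x⟫ := by
  have hxy := hlow x y
  have hyx := hlow y x
  rw [← neg_sub y x, inner_neg_right] at hyx
  rw [inner_sub_left]
  linarith

theorem mul_sub_norm_sq_le_of_bregman_bounds {h : E → ℝ} {g : E → E} {M : ℝ}
    (hlow : ∀ x y, h x + ⟪g x, y - x⟫ ≤ h y)
    (hup : ∀ x y, h y ≤ h x + ⟪g x, y - x⟫ + M / 2 * ‖y - x‖ ^ 2) (x y : E) (t : ℝ) :
    (t - M / 2 * t ^ 2) * ‖g y - g x‖ ^ 2 ≤ h y - h x - ⟪g x, y - x⟫ := by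
  have hz := (hlow x (y - t • (g y - g x))).trans (hup y (y - t • (g y - g x)))
  rw [sub_sub_cancel_left, norm_neg, norm_smul, Real.norm_eq_abs, mul_pow, sq_abs,
    inner_neg_right, real_inner_smul_right, sub_right_comm, inner_sub_right,
    real_inner_smul_right] at hz
  have hδ : ⟪g y, g y - g x⟫ - ⟪g x, g y - g x⟫ = ‖g y - g x‖ ^ 2 := by
    rw [← inner_sub_left, real_inner_self_eq_norm_sq]
  linear_combination hz - t * hδ

theorem norm_sub_sq_le_mul_inner_of_bregman_bounds {h : E → ℝ} {g : E → E} {M : ℝ}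
    (hM : 0 ≤ M) (hlow : ∀ x y, h x + ⟪g x, y - x⟫ ≤ h y)
    (hup : ∀ x y, h y ≤ h x + ⟪g x, y - x⟫ + M / 2 * ‖y - x‖ ^ 2) (x y : E) :
    ‖g y - g x‖ ^ 2 ≤ M * ⟪g y - g x, y - x⟫ := by
  set N := ‖g y - g x‖ ^ 2
  set c := ⟪g y - g x, y - x⟫ with hc
  have key : ∀ t, (2 * t - M * t ^ 2) * N ≤ c := by
    intro t
    have hxy := mul_sub_norm_sq_le_of_bregman_bounds hlow hup x y t
    have hyx := mul_sub_norm_sq_le_of_bregman_bounds hlow hup y x t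
    rw [norm_sub_rev, ← neg_sub y x, inner_neg_right] at hyx
    rw [hc, inner_sub_left]
    linarith
  rcases hM.eq_or_lt with rfl | hM
  · by_contra! hN
    rw [zero_mul] at hN
    have h1 := key ((c + 1) / N)
    have h0 := key 0
    rw [zero_mul, sub_zero, mul_assoc, div_mul_cancel₀ _ hN.ne'] at h1
    simp only [mul_zero, sub_zero, zero_mul] at h0
    linarith
  · have h1 := key M⁻¹
    rw [← mul_le_mul_iff_of_pos_left hM] at h1
    field_simp at h1
    linarith

theorem norm_smul_sub_smul_le {d u : E} {α β : ℝ} (hα : 0 ≤ α) (hβ : 0 ≤ β)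
    (h : α * ‖u‖ ^ 2 ≤ 2 * β * ⟪u, d⟫) :
    ‖β • d - α • u‖ ≤ β * ‖d‖ := by
  refine le_of_pow_le_pow_left₀ two_ne_zero (by positivity) ?_
  rw [norm_sub_sq_real, norm_smul, norm_smul, real_inner_smul_left, real_inner_smul_right,
    Real.norm_of_nonneg hα, Real.norm_of_nonneg hβ, real_inner_comm]
  nlinarith [mul_le_mul_of_nonneg_left h hα]

theorem norm_sub_smul_gradient_sub_le [CompleteSpace E] {f : E → ℝ} {μ L α : ℝ} (hμL : μ ≤ L)
    (hf : Differentiable ℝ f)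
    (hsc : ∀ x y, f x + ⟪gradient f x, y - x⟫ + μ / 2 * ‖x - y‖ ^ 2 ≤ f y)
    (hL : ∀ x y, ‖gradient f x - gradient f y‖ ≤ L * ‖x - y‖)
    (hα0 : 0 < α) (hα : α ≤ 1 / L) (x y : E) :
    ‖(x - α • gradient f x) - (y - α • gradient f y)‖ ≤ (1 - μ * α) * ‖x - y‖ := by
  have hbreg := sub_sub_inner_sub_half_mul_norm_sq f (gradient f) μ
  have hlow : ∀ x y, (f x - μ / 2 * ‖x‖ ^ 2) + ⟪gradient f x - μ • x, y - x⟫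
      ≤ f y - μ / 2 * ‖y‖ ^ 2 := by
    intro x y
    have := hsc x y
    rw [norm_sub_rev] at this
    linarith [hbreg x y]
  have hup : ∀ x y, f y - μ / 2 * ‖y‖ ^ 2 ≤ (f x - μ / 2 * ‖x‖ ^ 2)
      + ⟪gradient f x - μ • x, y - x⟫ + (L - μ) / 2 * ‖y - x‖ ^ 2 := by
    intro x y
    linarith [hbreg x y, le_add_inner_gradient_add_of_lipschitz_gradient hf hL x y]
  set u := (gradient f x - μ • x) - (gradient f y - μ • y)
  have hmono : 0 ≤ ⟪u, x - y⟫ := inner_sub_nonneg_of_affine_minorants hlow y x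
  have hcoco : ‖u‖ ^ 2 ≤ (L - μ) * ⟪u, x - y⟫ :=
    norm_sub_sq_le_mul_inner_of_bregman_bounds (sub_nonneg.2 hμL) hlow hup y x
  have hαL : α * L ≤ 1 := (le_div_iff₀ (one_div_pos.1 (hα0.trans_le hα))).1 hα
  have hstep : (x - α • gradient f x) - (y - α • gradient f y)
      = (1 - μ * α) • (x - y) - α • u := by
    simp only [u]; module
  rw [hstep]
  refine norm_smul_sub_smul_le hα0.le (by nlinarith) ?_
  nlinarith [mul_le_mul_of_nonneg_left hcoco hα0.le]

end

theorem gradient_step_contraction_general {p : ℕ} (F : EuclideanSpace ℝ (Fin p) → ℝ) (μ L : ℝ)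
    (hμL : μ ≤ L)
    (hdiff : Differentiable ℝ F)
    (hsc : ∀ x y : EuclideanSpace ℝ (Fin p),
      F x + ⟪gradient F x, y - x⟫ + μ / 2 * ‖x - y‖ ^ 2 ≤ F y)
    (hsmooth : ∀ x y : EuclideanSpace ℝ (Fin p),
      ‖gradient F x - gradient F y‖ ≤ L * ‖x - y‖)
    (xstar : EuclideanSpace ℝ (Fin p))
    (hmin : ∀ y, F xstar ≤ F y)
    (α : ℝ) (hα0 : 0 < α) (hα : α ≤ 1 / L)
    (x : EuclideanSpace ℝ (Fin p)) :
    ‖x - α • gradient F x - xstar‖ ≤ (1 - μ * α) * ‖x - xstar‖ := by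
  have hcrit : gradient F xstar = 0 := IsLocalMin.gradient_eq_zero (.of_forall hmin)
  simpa [hcrit] using norm_sub_smul_gradient_sub_le hμL hdiff hsc hsmooth hα0 hα x xstar

/-- For a differentiable, `μ`-strongly convex and `L`-smooth
function `F` (with `0 < μ ≤ L`) with unique minimizer `xstar`, a gradient step
with step-size `0 < α ≤ 1/L` is a `(1 - μα)`-contraction towards `xstar`. -/
theorem gradient_step_contraction {p : ℕ} (F : EuclideanSpace ℝ (Fin p) → ℝ) (μ L : ℝ)
    (hμ : 0 < μ) (hμL : μ ≤ L)
    (hdiff : Differentiable ℝ F)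
    (hsc : ∀ x y : EuclideanSpace ℝ (Fin p),
      F x + ⟪gradient F x, y - x⟫ + μ / 2 * ‖x - y‖ ^ 2 ≤ F y)
    (hsmooth : ∀ x y : EuclideanSpace ℝ (Fin p),
      ‖gradient F x - gradient F y‖ ≤ L * ‖x - y‖)
    (xstar : EuclideanSpace ℝ (Fin p))
    (hmin : ∀ y, F xstar ≤ F y)
    (huniq : ∀ z : EuclideanSpace ℝ (Fin p), (∀ y, F z ≤ F y) → z = xstar)
    (α : ℝ) (hα0 : 0 < α) (hα : α ≤ 1 / L)
    (x : EuclideanSpace ℝ (Fin p)) :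
    ‖x - α • gradient F x - xstar‖ ≤ (1 - μ * α) * ‖x - xstar‖ :=
  gradient_step_contraction_general F μ L hμL hdiff hsc hsmooth xstar hmin α hα0 hα x
end

section
/- Let W ∈ ℝ^{n×n} be doubly stochastic with σ := ‖W − (1/n)1_n1_nᵀ‖₂ < 1, let α ∈ ℝ, and let X, Y ∈ ℝ^{n×p}. Define X⁺ := WX − αY. Then both of the following hold: (i) ‖X⁺ − JX⁺‖_F² ≤ ((1+σ²)/2)‖X − JX‖_F² + (2α²/(1−σ²))‖Y − JY‖_F²; (ii) ‖X⁺ − JX⁺‖_F² ≤ 2‖X − JX‖_F² + 2α²‖Y − JY‖_F². -/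
/-- The ℓ₂ operator (spectral) norm of a real matrix. -/
noncomputable def l2OpNorm {m n : ℕ} (A : Matrix (Fin m) (Fin n) ℝ) : ℝ :=
  ‖LinearMap.toContinuousLinearMap (Matrix.toEuclideanLin A)‖

/-- The Frobenius norm of a real matrix. -/
noncomputable def frobNorm {n p : ℕ} (X : Matrix (Fin n) (Fin p) ℝ) : ℝ :=
  Real.sqrt (∑ i, ∑ j, X i j ^ 2)

/-- The averaging matrix `J = (1/n) 1ₙ1ₙᵀ`. -/
noncomputable def avgMat (n : ℕ) : Matrix (Fin n) (Fin n) ℝ := Matrix.of fun _ _ => (n : ℝ)⁻¹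

/-- A matrix is doubly stochastic if it is entrywise nonnegative and all its
row sums and column sums equal `1`. -/
def IsDoublyStochastic {n : ℕ} (W : Matrix (Fin n) (Fin n) ℝ) : Prop :=
  (∀ i j, 0 ≤ W i j) ∧ (∀ i, ∑ j, W i j = 1) ∧ (∀ j, ∑ i, W i j = 1)

/-!
Since `W` is doubly stochastic, `WJ = JW = J` and `J² = J`, so the consensus error of the update
is `X⁺ − JX⁺ = (W − J)(X − JX) − α(Y − JY)`. Bounding the Frobenius norm of a product by the
spectral norm of the left factor times the Frobenius norm of the right one (column by column)
gives `‖X⁺ − JX⁺‖_F ≤ σ c + |α| d` with `c = ‖X − JX‖_F`, `d = ‖Y − JY‖_F`. Both inequalities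
then follow from weighted Young inequalities for `(σ c + b)²`.
-/

open Matrix

section FrobeniusNorm

variable {m n p : ℕ}

section

attribute [local instance] Matrix.frobeniusNormedAddCommGroup Matrix.frobeniusNormedSpace

lemma frobNorm_eq_norm (X : Matrix (Fin n) (Fin p) ℝ) : frobNorm X = ‖X‖ := by
  rw [frobNorm, frobenius_norm_def, Real.sqrt_eq_rpow]
  simp only [Real.norm_eq_abs, Real.rpow_two, sq_abs]

lemma frobNorm_sub_le (X Y : Matrix (Fin n) (Fin p) ℝ) :
    frobNorm (X - Y) ≤ frobNorm X + frobNorm Y := by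
  simpa only [frobNorm_eq_norm] using norm_sub_le X Y

lemma frobNorm_smul (a : ℝ) (X : Matrix (Fin n) (Fin p) ℝ) :
    frobNorm (a • X) = |a| * frobNorm X := by
  simp only [frobNorm_eq_norm, norm_smul, Real.norm_eq_abs]

end

lemma frobNorm_nonneg (X : Matrix (Fin n) (Fin p) ℝ) : 0 ≤ frobNorm X :=
  Real.sqrt_nonneg _

lemma frobNorm_sq_eq_sum_col (X : Matrix (Fin n) (Fin p) ℝ) :
    frobNorm X ^ 2 = ∑ j, ‖WithLp.toLp 2 (Xᵀ j)‖ ^ 2 := by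
  rw [frobNorm, Real.sq_sqrt (by positivity), Finset.sum_comm]
  simp only [EuclideanSpace.norm_sq_eq, Real.norm_eq_abs, sq_abs, transpose_apply]

lemma frobNorm_mul_le (A : Matrix (Fin m) (Fin n) ℝ) (X : Matrix (Fin n) (Fin p) ℝ) :
    frobNorm (A * X) ≤ l2OpNorm A * frobNorm X := by
  have hcol (j : Fin p) :
      ‖WithLp.toLp 2 ((A * X)ᵀ j)‖ ≤ l2OpNorm A * ‖WithLp.toLp 2 (Xᵀ j)‖ := by
    have h := (LinearMap.toContinuousLinearMap (toEuclideanLin A)).le_opNorm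
      (WithLp.toLp 2 (Xᵀ j))
    rwa [LinearMap.coe_toContinuousLinearMap', toLpLin_toLp, toLin'_apply] at h
  have hsq : frobNorm (A * X) ^ 2 ≤ (l2OpNorm A * frobNorm X) ^ 2 := by
    rw [mul_pow, frobNorm_sq_eq_sum_col, frobNorm_sq_eq_sum_col, Finset.mul_sum]
    gcongr with j
    rw [← mul_pow]
    exact pow_le_pow_left₀ (norm_nonneg _) (hcol j) 2
  exact le_of_sq_le_sq hsq (mul_nonneg (norm_nonneg _) (frobNorm_nonneg X))

end FrobeniusNorm

section Averaging

variable {n p : ℕ}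

lemma avgMat_mul_avgMat : avgMat n * avgMat n = avgMat n := by
  ext i j
  have hn : (n : ℝ) ≠ 0 := Nat.cast_ne_zero.mpr (Fin.pos i).ne'
  simp only [avgMat, mul_apply, of_apply, Finset.sum_const, Finset.card_univ, Fintype.card_fin,
    nsmul_eq_mul]
  field_simp

namespace IsDoublyStochastic

variable {W : Matrix (Fin n) (Fin n) ℝ}

lemma mul_avgMat (hW : IsDoublyStochastic W) : W * avgMat n = avgMat n := by
  ext i j
  simp only [avgMat, mul_apply, of_apply, ← Finset.sum_mul, hW.2.1 i, one_mul]

lemma avgMat_mul (hW : IsDoublyStochastic W) : avgMat n * W = avgMat n := by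
  ext i j
  simp only [avgMat, mul_apply, of_apply, ← Finset.mul_sum, hW.2.2 j, mul_one]

lemma sub_avgMat_mul_update (hW : IsDoublyStochastic W) (α : ℝ) (X Y : Matrix (Fin n) (Fin p) ℝ) :
    (W * X - α • Y) - avgMat n * (W * X - α • Y) =
      (W - avgMat n) * (X - avgMat n * X) - α • (Y - avgMat n * Y) := by
  simp only [Matrix.mul_sub, Matrix.sub_mul, Matrix.mul_smul, smul_sub, ← Matrix.mul_assoc,
    hW.mul_avgMat, hW.avgMat_mul, avgMat_mul_avgMat]
  abel

end IsDoublyStochastic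

end Averaging

lemma sq_mul_add_le_of_sq_lt_one {σ : ℝ} (hσ : σ ^ 2 < 1) (c b : ℝ) :
    (σ * c + b) ^ 2 ≤ (1 + σ ^ 2) / 2 * c ^ 2 + 2 / (1 - σ ^ 2) * b ^ 2 := by
  have hpos : 0 < 1 - σ ^ 2 := by linarith
  rw [← sub_nonneg]
  have key : (1 + σ ^ 2) / 2 * c ^ 2 + 2 / (1 - σ ^ 2) * b ^ 2 - (σ * c + b) ^ 2 =
      (((1 - σ ^ 2) * c - 2 * σ * b) ^ 2 / 2 + (1 - σ ^ 2) * b ^ 2) / (1 - σ ^ 2) := by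
    field_simp
    ring
  rw [key]
  positivity

lemma sq_mul_add_le_of_sq_le_one {σ : ℝ} (hσ : σ ^ 2 ≤ 1) (c b : ℝ) :
    (σ * c + b) ^ 2 ≤ 2 * c ^ 2 + 2 * b ^ 2 := by
  nlinarith [sq_nonneg (σ * c - b), mul_le_mul_of_nonneg_right hσ (sq_nonneg c)]

/-- Consensus-error inequalities for the update `X⁺ = WX − αY`. -/
theorem consensus_error_update {n p : ℕ} (W : Matrix (Fin n) (Fin n) ℝ)
    (hW : IsDoublyStochastic W) (σ : ℝ) (hσ : σ = l2OpNorm (W - avgMat n))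
    (hσ1 : σ < 1) (α : ℝ) (X Y Xp : Matrix (Fin n) (Fin p) ℝ)
    (hXp : Xp = W * X - α • Y) :
    frobNorm (Xp - avgMat n * Xp) ^ 2 ≤
        (1 + σ ^ 2) / 2 * frobNorm (X - avgMat n * X) ^ 2 +
          2 * α ^ 2 / (1 - σ ^ 2) * frobNorm (Y - avgMat n * Y) ^ 2 ∧
      frobNorm (Xp - avgMat n * Xp) ^ 2 ≤
        2 * frobNorm (X - avgMat n * X) ^ 2 +
          2 * α ^ 2 * frobNorm (Y - avgMat n * Y) ^ 2 := by
  set c := frobNorm (X - avgMat n * X)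
  set b := |α| * frobNorm (Y - avgMat n * Y)
  have hσ0 : 0 ≤ σ := hσ ▸ norm_nonneg _
  have hb : b ^ 2 = α ^ 2 * frobNorm (Y - avgMat n * Y) ^ 2 := by rw [mul_pow, sq_abs]
  have hle : frobNorm (Xp - avgMat n * Xp) ≤ σ * c + b := by
    calc frobNorm (Xp - avgMat n * Xp)
        = frobNorm ((W - avgMat n) * (X - avgMat n * X) - α • (Y - avgMat n * Y)) := by
          rw [hXp, hW.sub_avgMat_mul_update]
      _ ≤ l2OpNorm (W - avgMat n) * c + b := by
          grw [frobNorm_sub_le, frobNorm_mul_le, frobNorm_smul]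
      _ = σ * c + b := by rw [hσ]
  have hsq := pow_le_pow_left₀ (frobNorm_nonneg _) hle 2
  have hσsq : σ ^ 2 < 1 := by nlinarith
  constructor
  · calc _ ≤ (σ * c + b) ^ 2 := hsq
      _ ≤ _ := sq_mul_add_le_of_sq_lt_one hσsq c b
      _ = _ := by rw [hb]; ring
  · calc _ ≤ (σ * c + b) ^ 2 := hsq
      _ ≤ _ := sq_mul_add_le_of_sq_le_one hσsq.le c b
      _ = _ := by rw [hb]; ring
end

section
/- Let W ∈ ℝ^{n×n} be doubly stochastic with σ := ‖W − (1/n)1_n1_nᵀ‖₂ < 1, and let Y, R, R⁺ ∈ ℝ^{n×p}. Define Y⁺ := WY + R⁺ − R. Then ‖Y⁺ − JY⁺‖_F² ≤ ((1+σ²)/2)‖Y − JY‖_F² + (2/(1−σ²))‖R⁺ − R‖_F². -/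
lemma frobNorm_sq {n p : ℕ} (X : Matrix (Fin n) (Fin p) ℝ) :
    frobNorm X ^ 2 = ∑ i, ∑ j, X i j ^ 2 :=
  Real.sq_sqrt (Finset.sum_nonneg fun i _ => Finset.sum_nonneg fun j _ => sq_nonneg _)

lemma sumSq_nonneg {n p : ℕ} (X : Matrix (Fin n) (Fin p) ℝ) :
    0 ≤ ∑ i, ∑ j, X i j ^ 2 :=
  Finset.sum_nonneg fun i _ => Finset.sum_nonneg fun j _ => sq_nonneg _

lemma sum_sq_mulVec_le {m n : ℕ} (A : Matrix (Fin m) (Fin n) ℝ) (v : Fin n → ℝ) :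
    ∑ i, (A.mulVec v i)^2 ≤ l2OpNorm A ^ 2 * ∑ i, (v i)^2 := by
  set f := LinearMap.toContinuousLinearMap (Matrix.toEuclideanLin A)
  set x : EuclideanSpace ℝ (Fin n) := (WithLp.equiv 2 (Fin n → ℝ)).symm v
  have hfx : f x = (WithLp.equiv 2 (Fin m → ℝ)).symm (A.mulVec v) := rfl
  have h := f.le_opNorm x
  have hx : ‖x‖ = Real.sqrt (∑ i, (v i)^2) := by
    rw [EuclideanSpace.norm_eq]
    congr 1
    simp [x, Real.norm_eq_abs, sq_abs]
  have hfx' : ‖f x‖ = Real.sqrt (∑ i, (A.mulVec v i)^2) := by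
    rw [EuclideanSpace.norm_eq]
    congr 1
    simp [hfx, Real.norm_eq_abs, sq_abs]
  have h1 : ‖f x‖^2 ≤ (‖f‖ * ‖x‖)^2 := by
    apply sq_le_sq' <;> nlinarith [norm_nonneg (f x), norm_nonneg x, norm_nonneg f]
  have hs1 : (0:ℝ) ≤ ∑ i, (A.mulVec v i)^2 := Finset.sum_nonneg fun i _ => sq_nonneg _
  have hs2 : (0:ℝ) ≤ ∑ i, (v i)^2 := Finset.sum_nonneg fun i _ => sq_nonneg _
  rw [hfx', hx] at h1
  rw [Real.sq_sqrt hs1] at h1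
  calc ∑ i, (A.mulVec v i)^2 ≤ (‖f‖ * Real.sqrt (∑ i, (v i)^2))^2 := h1
    _ = l2OpNorm A ^2 * ∑ i, (v i)^2 := by
        rw [mul_pow, Real.sq_sqrt hs2]; rfl

lemma sumSq_mul_le {n p : ℕ} (A : Matrix (Fin n) (Fin n) ℝ) (X : Matrix (Fin n) (Fin p) ℝ) :
    ∑ i, ∑ j, (A * X) i j ^ 2 ≤ l2OpNorm A ^ 2 * ∑ i, ∑ j, X i j ^ 2 := by
  rw [Finset.sum_comm]
  rw [show (∑ i, ∑ j, X i j ^ 2) = ∑ j, ∑ i, X i j ^ 2 from Finset.sum_comm,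
    Finset.mul_sum]
  apply Finset.sum_le_sum
  intro j _
  have := sum_sq_mulVec_le A (fun k => X k j)
  simpa [Matrix.mul_apply, Matrix.mulVec, dotProduct] using this

lemma young_sq (a b ε : ℝ) (hε : 0 < ε) :
    (a + b)^2 ≤ (1 + ε) * a^2 + (1 + ε⁻¹) * b^2 := by
  have h1 : (0:ℝ) ≤ (ε * a - b)^2 / ε := div_nonneg (sq_nonneg _) hε.le
  have key : ε*a^2 + ε⁻¹*b^2 - 2*a*b = (ε*a - b)^2 / ε := by
    field_simp
    ring
  nlinarith [h1, key]

set_option maxHeartbeats 1000000 in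
/-- Gradient-tracking consensus inequality for the update
`Y⁺ = WY + R⁺ − R`. -/
theorem tracking_error_update {n p : ℕ} (W : Matrix (Fin n) (Fin n) ℝ)
    (hW : IsDoublyStochastic W) (σ : ℝ) (hσ : σ = l2OpNorm (W - avgMat n))
    (hσ1 : σ < 1) (Y R Rp Yp : Matrix (Fin n) (Fin p) ℝ)
    (hYp : Yp = W * Y + Rp - R) :
    frobNorm (Yp - avgMat n * Yp) ^ 2 ≤
      (1 + σ ^ 2) / 2 * frobNorm (Y - avgMat n * Y) ^ 2 +
        2 / (1 - σ ^ 2) * frobNorm (Rp - R) ^ 2 := by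
  rcases Nat.eq_zero_or_pos n with hn | hn
  · subst hn
    simp [frobNorm]
  have hn' : (n : ℝ) ≠ 0 := by positivity
  have hσ0 : 0 ≤ σ := hσ ▸ norm_nonneg _
  have hσ2 : σ^2 < 1 := by nlinarith
  set J := avgMat n with hJ
  set D := Rp - R with hD
  set Y' := Y - J * Y with hY'
  set D' := D - J * D with hD'
  -- matrix identities
  have hJJ : J * J = J := by
    ext i j
    simp [hJ, avgMat, Matrix.mul_apply, Finset.sum_const, Finset.card_fin]
    field_simp
  have hWJ : W * J = J := by
    ext i j
    simp only [hJ, avgMat, Matrix.mul_apply, Matrix.of_apply]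
    rw [← Finset.sum_mul, hW.2.1 i, one_mul]
  have hJW : J * W = J := by
    ext i j
    simp only [hJ, avgMat, Matrix.mul_apply, Matrix.of_apply]
    rw [← Finset.mul_sum, hW.2.2 j, mul_one]
  have hdecomp : Yp - J * Yp = (W - J) * Y' + D' := by
    have e1 : Yp - J * Yp = W*Y + Rp - R - (J*Y + J*Rp - J*R) := by
      rw [hYp, Matrix.mul_sub, Matrix.mul_add, ← Matrix.mul_assoc, hJW]
    have e2 : (W - J)*(Y - J*Y) = W*Y - J*Y := by
      rw [Matrix.sub_mul, Matrix.mul_sub, Matrix.mul_sub, ← Matrix.mul_assoc,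
        ← Matrix.mul_assoc, hWJ, hJJ]
      abel
    have e3 : Rp - R - J*(Rp - R) = Rp - R - (J*Rp - J*R) := by rw [Matrix.mul_sub]
    rw [e1, hY', hD', hD, e2, e3]
    abel
  -- Young with ε = (1-σ²)/(1+σ²)
  set ε : ℝ := (1 - σ^2)/(1 + σ^2) with hε
  have hεpos : 0 < ε := by
    apply div_pos <;> nlinarith
  have hyoung : ∑ i, ∑ j, (Yp - J * Yp) i j ^ 2 ≤
      (1 + ε) * ∑ i, ∑ j, ((W - J) * Y') i j ^ 2 + (1 + ε⁻¹) * ∑ i, ∑ j, D' i j ^ 2 := by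
    rw [hdecomp, Finset.mul_sum, Finset.mul_sum, ← Finset.sum_add_distrib]
    apply Finset.sum_le_sum
    intro i _
    rw [Finset.mul_sum, Finset.mul_sum, ← Finset.sum_add_distrib]
    apply Finset.sum_le_sum
    intro j _
    exact young_sq _ _ _ hεpos
  -- spectral bound
  have hspec : ∑ i, ∑ j, ((W - J) * Y') i j ^ 2 ≤ σ^2 * ∑ i, ∑ j, Y' i j ^ 2 := by
    have := sumSq_mul_le (W - J) Y'
    rw [← hσ] at this
    exact this
  -- variance bound: ∑ (D - J D)² ≤ ∑ D²
  have hvar : ∑ i, ∑ j, D' i j ^ 2 ≤ ∑ i, ∑ j, D i j ^ 2 := by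
    rw [Finset.sum_comm]
    rw [show (∑ i, ∑ j, D i j ^ 2) = ∑ j, ∑ i, D i j ^ 2 from Finset.sum_comm]
    apply Finset.sum_le_sum
    intro j _
    have hJD : ∀ i, (J * D) i j = (↑n)⁻¹ * ∑ k, D k j := by
      intro i
      simp [hJ, avgMat, Matrix.mul_apply, Finset.mul_sum]
    set s := ∑ k, D k j with hs
    have expand : ∑ i, (D' i j)^2 = ∑ i, (D i j)^2 - 2*((↑n)⁻¹*s)*s + n*((↑n)⁻¹*s)^2 := by
      have : ∀ i, (D' i j)^2 = (D i j)^2 - 2*((↑n)⁻¹*s)*(D i j) + ((↑n)⁻¹*s)^2 := by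
        intro i
        rw [hD', Matrix.sub_apply, hJD i]
        ring
      rw [Finset.sum_congr rfl fun i _ => this i]
      rw [Finset.sum_add_distrib, Finset.sum_sub_distrib, ← Finset.mul_sum, ← hs,
        Finset.sum_const, Finset.card_fin, nsmul_eq_mul]
    rw [expand]
    have : 2*((↑n)⁻¹*s)*s - (n:ℝ)*((↑n)⁻¹*s)^2 = s^2/n := by
      field_simp
      ring
    linarith [this, div_nonneg (sq_nonneg s) (le_of_lt (show (0:ℝ) < n by positivity))]
  -- combine
  rw [frobNorm_sq, frobNorm_sq, frobNorm_sq]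
  have hpos1 : (0:ℝ) < 1 + σ^2 := by nlinarith
  have c1 : (1 + ε) * σ^2 ≤ (1 + σ^2)/2 := by
    rw [hε]
    have h4 : 1 + (1 - σ^2)/(1 + σ^2) = 2/(1 + σ^2) := by
      field_simp
      norm_num
    rw [h4, div_mul_eq_mul_div, div_le_div_iff₀ hpos1 (by norm_num)]
    nlinarith [sq_nonneg (1 - σ^2)]
  have h1σ : (1:ℝ) - σ^2 ≠ 0 := by nlinarith
  have c2 : 1 + ε⁻¹ = 2/(1 - σ^2) := by
    rw [hε, inv_div, eq_div_iff h1σ, add_mul, one_mul, div_mul_cancel₀ _ h1σ]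
    ring
  have hSY' := sumSq_nonneg Y'
  have hSD := sumSq_nonneg D
  have hSD' := sumSq_nonneg D'
  calc ∑ i, ∑ j, (Yp - J * Yp) i j ^ 2
      ≤ (1 + ε) * ∑ i, ∑ j, ((W - J) * Y') i j ^ 2 + (1 + ε⁻¹) * ∑ i, ∑ j, D' i j ^ 2 :=
        hyoung
    _ ≤ (1 + ε) * (σ^2 * ∑ i, ∑ j, Y' i j ^ 2) + (1 + ε⁻¹) * ∑ i, ∑ j, D i j ^ 2 := by
        apply add_le_add
        · exact mul_le_mul_of_nonneg_left hspec (by positivity)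
        · exact mul_le_mul_of_nonneg_left hvar
            (by rw [c2]; exact div_nonneg (by norm_num) (by nlinarith))
    _ ≤ (1 + σ^2)/2 * ∑ i, ∑ j, Y' i j ^ 2 + 2/(1 - σ^2) * ∑ i, ∑ j, D i j ^ 2 := by
        apply add_le_add
        · rw [← mul_assoc]
          exact mul_le_mul_of_nonneg_right c1 hSY'
        · rw [c2]
end

section
/- Let f_1, …, f_n : ℝ^p → ℝ each be L-smooth and let x* ∈ ℝ^p satisfy ∑_{i=1}^n ∇f_i(x*) = 0. Let X, Y, R ∈ ℝ^{n×p} have rows x_i, y_i, r_i respectively, and suppose (1/n)∑_i y_i = (1/n)∑_i r_i. Write ∇f(X) ∈ ℝ^{n×p} for the matrix whose i-th row is ∇f_i(x_i), and x̄ := (1/n)∑_i x_i. Then ‖Y‖_F² ≤ 4L²‖X − JX‖_F² + 4nL²‖x̄ − x*‖² + 4‖Y − JY‖_F² + 4‖R − ∇f(X)‖_F². -/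
-- auxiliary: Cauchy–Schwarz for the average of vectors
lemma avg_sq_le {n : ℕ} {E : Type*} [NormedAddCommGroup E] [NormedSpace ℝ E]
    (v : Fin n → E) :
    (n : ℝ) * ‖(n : ℝ)⁻¹ • ∑ i, v i‖ ^ 2 ≤ ∑ i, ‖v i‖ ^ 2 := by
  rcases Nat.eq_zero_or_pos n with h | h
  · subst h; simp
  have hn : (0:ℝ) < n := by exact_mod_cast h
  have h1 : ‖(n : ℝ)⁻¹ • ∑ i, v i‖ = (n:ℝ)⁻¹ * ‖∑ i, v i‖ := by
    rw [norm_smul, Real.norm_eq_abs, abs_of_nonneg (by positivity)]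
  have h2 : ‖∑ i, v i‖ ≤ ∑ i, ‖v i‖ := norm_sum_le _ _
  have h3 : (∑ i, ‖v i‖) ^ 2 ≤ (n:ℝ) * ∑ i, ‖v i‖ ^ 2 := by
    have := sq_sum_le_card_mul_sum_sq (s := Finset.univ) (f := fun i => ‖v i‖)
    simpa using this
  have h4 : ‖∑ i, v i‖ ^ 2 ≤ (∑ i, ‖v i‖) ^ 2 :=
    pow_le_pow_left₀ (norm_nonneg _) h2 2
  rw [h1]
  calc (n:ℝ) * ((n:ℝ)⁻¹ * ‖∑ i, v i‖) ^ 2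
      = (n:ℝ)⁻¹ * ‖∑ i, v i‖ ^ 2 := by field_simp
    _ ≤ (n:ℝ)⁻¹ * ((n:ℝ) * ∑ i, ‖v i‖ ^ 2) :=
        mul_le_mul_of_nonneg_left (h4.trans h3) (by positivity)
    _ = ∑ i, ‖v i‖ ^ 2 := by field_simp

set_option maxHeartbeats 2000000 in
/-- Bound on the norm of the gradient trackers: if each `f i` is
`L`-smooth, `∑ᵢ ∇fᵢ(x*) = 0` and the trackers `y i` have the same average as the
estimators `r i`, then
`∑ᵢ‖yᵢ‖² ≤ 4L²∑ᵢ‖xᵢ − x̄‖² + 4nL²‖x̄ − x*‖² + 4∑ᵢ‖yᵢ − ȳ‖² + 4∑ᵢ‖rᵢ − ∇fᵢ(xᵢ)‖²`. -/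
theorem tracker_norm_bound {p n : ℕ}
    (f : Fin n → EuclideanSpace ℝ (Fin p) → ℝ) (L : ℝ)
    (hdiff : ∀ i, Differentiable ℝ (f i))
    (hsmooth : ∀ i, ∀ x y : EuclideanSpace ℝ (Fin p),
      ‖gradient (f i) x - gradient (f i) y‖ ≤ L * ‖x - y‖)
    (xstar : EuclideanSpace ℝ (Fin p))
    (hstar : ∑ i, gradient (f i) xstar = 0)
    (x y r : Fin n → EuclideanSpace ℝ (Fin p))
    (xbar ybar : EuclideanSpace ℝ (Fin p))
    (hxbar : xbar = (n : ℝ)⁻¹ • ∑ i, x i)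
    (hybar : ybar = (n : ℝ)⁻¹ • ∑ i, y i)
    (hyr : (n : ℝ)⁻¹ • ∑ i, y i = (n : ℝ)⁻¹ • ∑ i, r i) :
    ∑ i, ‖y i‖ ^ 2 ≤
      4 * L ^ 2 * ∑ i, ‖x i - xbar‖ ^ 2 + 4 * n * L ^ 2 * ‖xbar - xstar‖ ^ 2 +
        4 * ∑ i, ‖y i - ybar‖ ^ 2 + 4 * ∑ i, ‖r i - gradient (f i) (x i)‖ ^ 2 := by
  rcases Nat.eq_zero_or_pos n with hn0 | hn0
  · subst hn0; simp
  have hn : (0:ℝ) < n := by exact_mod_cast hn0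
  set a := (n : ℝ)⁻¹ • ∑ j, (r j - gradient (f j) (x j)) with ha
  set b := (n : ℝ)⁻¹ • ∑ j, (gradient (f j) (x j) - gradient (f j) xbar) with hb
  set c := (n : ℝ)⁻¹ • ∑ j, (gradient (f j) xbar - gradient (f j) xstar) with hc
  -- the key decomposition
  have habc : a + b + c = ybar := by
    rw [ha, hb, hc, ← smul_add, ← smul_add, ← Finset.sum_add_distrib,
      ← Finset.sum_add_distrib]
    have hsum : ∑ j, (r j - gradient (f j) (x j) +
        (gradient (f j) (x j) - gradient (f j) xbar) +
        (gradient (f j) xbar - gradient (f j) xstar)) = ∑ j, r j := by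
      have h0 : ∑ j, (r j - gradient (f j) xstar) = ∑ j, r j := by
        rw [Finset.sum_sub_distrib, hstar, sub_zero]
      rw [← h0]
      exact Finset.sum_congr rfl fun j _ => by abel
    rw [hsum, hybar, hyr]
  have hdecomp : ∀ i, y i = (y i - ybar) + a + b + c := by
    intro i
    have : (y i - ybar) + a + b + c = (y i - ybar) + (a + b + c) := by abel
    rw [this, habc]; abel
  -- L * ‖xbar - xstar‖ is nonneg
  have hL0 : 0 ≤ L * ‖xbar - xstar‖ :=
    le_trans (norm_nonneg _) (hsmooth ⟨0, hn0⟩ xbar xstar)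
  -- pointwise bound
  have hpt : ∀ i, ‖y i‖ ^ 2 ≤
      4 * (‖y i - ybar‖ ^ 2 + ‖a‖ ^ 2 + ‖b‖ ^ 2 + ‖c‖ ^ 2) := by
    intro i
    have h1 : ‖y i‖ ≤ ‖y i - ybar‖ + ‖a‖ + ‖b‖ + ‖c‖ := by
      calc ‖y i‖ = ‖(y i - ybar) + a + b + c‖ := by rw [← hdecomp]
        _ ≤ ‖(y i - ybar) + a + b‖ + ‖c‖ := norm_add_le _ _
        _ ≤ ‖(y i - ybar) + a‖ + ‖b‖ + ‖c‖ := by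
            have := norm_add_le ((y i - ybar) + a) b; linarith
        _ ≤ ‖y i - ybar‖ + ‖a‖ + ‖b‖ + ‖c‖ := by
            have := norm_add_le (y i - ybar) a; linarith
    have h2 : ‖y i‖ ^ 2 ≤ (‖y i - ybar‖ + ‖a‖ + ‖b‖ + ‖c‖) ^ 2 :=
      pow_le_pow_left₀ (norm_nonneg _) h1 2
    nlinarith [norm_nonneg (y i - ybar), norm_nonneg a, norm_nonneg b,
      norm_nonneg c, sq_nonneg (‖y i - ybar‖ - ‖a‖), sq_nonneg (‖y i - ybar‖ - ‖b‖),
      sq_nonneg (‖y i - ybar‖ - ‖c‖), sq_nonneg (‖a‖ - ‖b‖), sq_nonneg (‖a‖ - ‖c‖),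
      sq_nonneg (‖b‖ - ‖c‖)]
  have hsplit : ∑ i : Fin n, (‖y i - ybar‖ ^ 2 + ‖a‖ ^ 2 + ‖b‖ ^ 2 + ‖c‖ ^ 2)
      = ∑ i, ‖y i - ybar‖ ^ 2 + (n : ℝ) * ‖a‖ ^ 2 + (n : ℝ) * ‖b‖ ^ 2 +
        (n : ℝ) * ‖c‖ ^ 2 := by
    rw [Finset.sum_add_distrib, Finset.sum_add_distrib, Finset.sum_add_distrib,
      Finset.sum_const, Finset.sum_const, Finset.sum_const]
    simp [nsmul_eq_mul]
  have hsum1 : ∑ i, ‖y i‖ ^ 2 ≤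
      4 * (∑ i, ‖y i - ybar‖ ^ 2 + (n : ℝ) * ‖a‖ ^ 2 + (n : ℝ) * ‖b‖ ^ 2 +
        (n : ℝ) * ‖c‖ ^ 2) := by
    calc ∑ i, ‖y i‖ ^ 2
        ≤ ∑ i : Fin n, 4 * (‖y i - ybar‖ ^ 2 + ‖a‖ ^ 2 + ‖b‖ ^ 2 + ‖c‖ ^ 2) :=
          Finset.sum_le_sum fun i _ => hpt i
      _ = 4 * ∑ i : Fin n, (‖y i - ybar‖ ^ 2 + ‖a‖ ^ 2 + ‖b‖ ^ 2 + ‖c‖ ^ 2) := by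
          rw [← Finset.mul_sum]
      _ = _ := by rw [hsplit]
  -- bound on a
  have hA : (n : ℝ) * ‖a‖ ^ 2 ≤ ∑ i, ‖r i - gradient (f i) (x i)‖ ^ 2 :=
    avg_sq_le _
  -- bound on b
  have hB : (n : ℝ) * ‖b‖ ^ 2 ≤ L ^ 2 * ∑ i, ‖x i - xbar‖ ^ 2 := by
    calc (n : ℝ) * ‖b‖ ^ 2
        ≤ ∑ i, ‖gradient (f i) (x i) - gradient (f i) xbar‖ ^ 2 := avg_sq_le _
      _ ≤ ∑ i, L ^ 2 * ‖x i - xbar‖ ^ 2 := by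
          apply Finset.sum_le_sum
          intro i _
          have h := hsmooth i (x i) xbar
          calc ‖gradient (f i) (x i) - gradient (f i) xbar‖ ^ 2
              ≤ (L * ‖x i - xbar‖) ^ 2 := pow_le_pow_left₀ (norm_nonneg _) h 2
            _ = L ^ 2 * ‖x i - xbar‖ ^ 2 := by ring
      _ = L ^ 2 * ∑ i, ‖x i - xbar‖ ^ 2 := by rw [Finset.mul_sum]
  -- bound on c
  have hC : (n : ℝ) * ‖c‖ ^ 2 ≤ (n : ℝ) * L ^ 2 * ‖xbar - xstar‖ ^ 2 := by
    have hcn : ‖c‖ ≤ L * ‖xbar - xstar‖ := by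
      rw [hc, norm_smul, Real.norm_eq_abs, abs_of_nonneg (by positivity)]
      have h1 : ‖∑ j, (gradient (f j) xbar - gradient (f j) xstar)‖ ≤
          ∑ j : Fin n, L * ‖xbar - xstar‖ :=
        le_trans (norm_sum_le _ _) (Finset.sum_le_sum fun j _ => hsmooth j xbar xstar)
      have h2 : ∑ _j : Fin n, L * ‖xbar - xstar‖ = (n : ℝ) * (L * ‖xbar - xstar‖) := by
        simp
      rw [h2] at h1
      calc (n:ℝ)⁻¹ * ‖∑ j, (gradient (f j) xbar - gradient (f j) xstar)‖
          ≤ (n:ℝ)⁻¹ * ((n : ℝ) * (L * ‖xbar - xstar‖)) :=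
            mul_le_mul_of_nonneg_left h1 (by positivity)
        _ = L * ‖xbar - xstar‖ := by field_simp
    have h3 : ‖c‖ ^ 2 ≤ (L * ‖xbar - xstar‖) ^ 2 :=
      pow_le_pow_left₀ (norm_nonneg _) hcn 2
    calc (n : ℝ) * ‖c‖ ^ 2 ≤ (n : ℝ) * (L * ‖xbar - xstar‖) ^ 2 :=
          mul_le_mul_of_nonneg_left h3 hn.le
      _ = (n : ℝ) * L ^ 2 * ‖xbar - xstar‖ ^ 2 := by ring
  nlinarith [hA, hB, hC, hsum1]
end

section
/- Let f_1, …, f_m : ℝ^p → ℝ each be L-smooth. For any x, τ, x* ∈ ℝ^p, (1/m)∑_{j=1}^m ‖ ∇f_j(x) − ∇f_j(τ) − (1/m)∑_{l=1}^m (∇f_l(x) − ∇f_l(τ)) ‖² ≤ 2L²‖x − x*‖² + 2L²‖τ − x*‖². (Equivalently: the variance, over a uniformly random index s ∈ {1,…,m}, of the SVRG gradient estimator ∇f_s(x) − ∇f_s(τ) + (1/m)∑_j ∇f_j(τ) around (1/m)∑_j ∇f_j(x) is bounded by 2L²‖x − x*‖² + 2L²‖τ − x*‖².) -/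
/-!
Write `g j = ∇f_j(x) − ∇f_j(τ)`. The left-hand side is the variance of the `g j` around their
mean, which is at most their second moment. Each `g j` is a difference of two gradient
increments measured from `x*`, so by smoothness and `(a + b)² ≤ 2(a² + b²)` we get
`‖g j‖² ≤ 2L²‖x − x*‖² + 2L²‖τ − x*‖²`.
-/

open Finset

lemma sum_norm_sub_average_sq_add_card_mul {ι E : Type*} [Fintype ι]
    [SeminormedAddCommGroup E] [InnerProductSpace ℝ E] (g : ι → E) :
    let a : E := (Fintype.card ι : ℝ)⁻¹ • ∑ i, g i
    ∑ i, ‖g i - a‖ ^ 2 + Fintype.card ι * ‖a‖ ^ 2 = ∑ i, ‖g i‖ ^ 2 := by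
  intro a
  have hsum : ∑ i, g i = (Fintype.card ι : ℝ) • a := by
    rcases (Fintype.card ι).eq_zero_or_pos with h | h
    · simp [Fintype.card_eq_zero_iff.mp h]
    · rw [smul_smul, mul_inv_cancel₀ (by positivity), one_smul]
  have hinner : ∑ i, inner ℝ (g i) a = Fintype.card ι * ‖a‖ ^ 2 := by
    rw [← sum_inner, hsum, real_inner_smul_left, real_inner_self_eq_norm_sq]
  simp only [norm_sub_sq_real, sum_add_distrib, sum_sub_distrib, ← mul_sum, hinner,
    sum_const, card_univ, nsmul_eq_mul]
  ring

lemma sum_norm_sub_average_sq_le {ι E : Type*} [Fintype ι]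
    [SeminormedAddCommGroup E] [InnerProductSpace ℝ E] (g : ι → E) :
    ∑ i, ‖g i - (Fintype.card ι : ℝ)⁻¹ • ∑ j, g j‖ ^ 2 ≤ ∑ i, ‖g i‖ ^ 2 := by
  rw [← sum_norm_sub_average_sq_add_card_mul g]
  exact le_add_of_nonneg_right (by positivity)

lemma norm_sub_sq_le_of_norm_sub_le_mul {E F : Type*} [SeminormedAddCommGroup E]
    [SeminormedAddCommGroup F] {G : E → F} {L : ℝ}
    (hG : ∀ x y, ‖G x - G y‖ ≤ L * ‖x - y‖) (x y z : E) :
    ‖G x - G y‖ ^ 2 ≤ 2 * L ^ 2 * ‖x - z‖ ^ 2 + 2 * L ^ 2 * ‖y - z‖ ^ 2 := by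
  have hx : ‖G x - G z‖ ^ 2 ≤ L ^ 2 * ‖x - z‖ ^ 2 := by
    rw [← mul_pow]; exact pow_le_pow_left₀ (norm_nonneg _) (hG x z) 2
  have hy : ‖G y - G z‖ ^ 2 ≤ L ^ 2 * ‖y - z‖ ^ 2 := by
    rw [← mul_pow]; exact pow_le_pow_left₀ (norm_nonneg _) (hG y z) 2
  calc ‖G x - G y‖ ^ 2 ≤ (‖G x - G z‖ + ‖G y - G z‖) ^ 2 := by
        gcongr
        simpa only [norm_sub_rev (G z)] using norm_sub_le_norm_sub_add_norm_sub (G x) (G z) (G y)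
    _ ≤ 2 * (‖G x - G z‖ ^ 2 + ‖G y - G z‖ ^ 2) := add_sq_le
    _ ≤ 2 * L ^ 2 * ‖x - z‖ ^ 2 + 2 * L ^ 2 * ‖y - z‖ ^ 2 := by linarith

lemma inv_card_mul_sum_le {ι : Type*} [Fintype ι] {a : ι → ℝ} {B : ℝ}
    (hB : 0 ≤ B) (ha : ∀ i, a i ≤ B) : (Fintype.card ι : ℝ)⁻¹ * ∑ i, a i ≤ B :=
  calc (Fintype.card ι : ℝ)⁻¹ * ∑ i, a i ≤ (Fintype.card ι : ℝ)⁻¹ * ∑ _i : ι, B := by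
        gcongr with i; exact ha i
    _ = ((Fintype.card ι : ℝ)⁻¹ * Fintype.card ι) * B := by simp [mul_assoc]
    _ ≤ B := mul_le_of_le_one_left hB (inv_mul_le_one_of_le₀ le_rfl (by positivity))

theorem svrg_variance_bound_general {p m : ℕ}
    (f : Fin m → EuclideanSpace ℝ (Fin p) → ℝ) (L : ℝ)
    (hsmooth : ∀ j, ∀ x y : EuclideanSpace ℝ (Fin p),
      ‖gradient (f j) x - gradient (f j) y‖ ≤ L * ‖x - y‖)
    (x τ xstar : EuclideanSpace ℝ (Fin p)) :
    (m : ℝ)⁻¹ * ∑ j, ‖gradient (f j) x - gradient (f j) τ -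
          (m : ℝ)⁻¹ • ∑ l, (gradient (f l) x - gradient (f l) τ)‖ ^ 2 ≤
      2 * L ^ 2 * ‖x - xstar‖ ^ 2 + 2 * L ^ 2 * ‖τ - xstar‖ ^ 2 := by
  set g : Fin m → EuclideanSpace ℝ (Fin p) := fun j => gradient (f j) x - gradient (f j) τ
  have hvar : ∑ j, ‖g j - (m : ℝ)⁻¹ • ∑ l, g l‖ ^ 2 ≤ ∑ j, ‖g j‖ ^ 2 := by
    simpa using sum_norm_sub_average_sq_le g
  have hbound : (m : ℝ)⁻¹ * ∑ j, ‖g j‖ ^ 2 ≤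
      2 * L ^ 2 * ‖x - xstar‖ ^ 2 + 2 * L ^ 2 * ‖τ - xstar‖ ^ 2 := by
    simpa using inv_card_mul_sum_le (by positivity) fun j =>
      norm_sub_sq_le_of_norm_sub_le_mul (hsmooth j) x τ xstar
  exact (mul_le_mul_of_nonneg_left hvar (by positivity)).trans hbound

/-- Variance bound for the SVRG gradient estimator:
`(1/m)∑_j ‖∇f_j(x) − ∇f_j(τ) − (1/m)∑_l (∇f_l(x) − ∇f_l(τ))‖²
  ≤ 2L²‖x − x*‖² + 2L²‖τ − x*‖²`. -/
theorem svrg_variance_bound {p m : ℕ} (hm : 0 < m)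
    (f : Fin m → EuclideanSpace ℝ (Fin p) → ℝ) (L : ℝ)
    (hdiff : ∀ j, Differentiable ℝ (f j))
    (hsmooth : ∀ j, ∀ x y : EuclideanSpace ℝ (Fin p),
      ‖gradient (f j) x - gradient (f j) y‖ ≤ L * ‖x - y‖)
    (x τ xstar : EuclideanSpace ℝ (Fin p)) :
    (m : ℝ)⁻¹ * ∑ j, ‖gradient (f j) x - gradient (f j) τ -
          (m : ℝ)⁻¹ • ∑ l, (gradient (f l) x - gradient (f l) τ)‖ ^ 2 ≤
      2 * L ^ 2 * ‖x - xstar‖ ^ 2 + 2 * L ^ 2 * ‖τ - xstar‖ ^ 2 :=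
  svrg_variance_bound_general f L hsmooth x τ xstar
end

section
/- Let 0 < μ ≤ L, Q := L/μ, σ ∈ [0, 1), integers 1 ≤ m ≤ M and n ≥ 1, and let α satisfy 0 < α ≤ min{ 1/(5μM), m(1−σ²)²/(320 M L Q) }. Then the positive vector ε := (1, 8.5Q², 20MQ²/m, 8700MQ²/(m(1−σ²)²)) satisfies G_α ε ≤ (1 − μα/4) ε entrywise, and consequently the spectral radius of G_α satisfies ρ(G_α) ≤ 1 − μα/4. In particular, for α = min{1/(5μM), m(1−σ²)²/(320MLQ)} one has ρ(G_α) ≤ 1 − min{ 1/(20M), m(1−σ²)²/(1280 M Q²) }. -/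
set_option maxHeartbeats 1000000

open Module.End in
/-- If a real nonnegative square matrix `A` satisfies `A x ≤ β x` for a positive vector `x`,
then every complex eigenvalue of `A` has modulus at most `β`. -/
lemma perron_bound' {N : ℕ} (A : Matrix (Fin N) (Fin N) ℝ) (x : Fin N → ℝ) (β : ℝ)
    (hA : ∀ i j, 0 ≤ A i j) (hx : ∀ i, 0 < x i)
    (hAx : ∀ i, (A.mulVec x) i ≤ β * x i) :
    ∀ lam ∈ spectrum ℂ (A.map (Complex.ofReal ·)), ‖lam‖ ≤ β := by
  intro lam hlam
  rw [← AlgEquiv.spectrum_eq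
      (Matrix.toLinAlgEquiv' : Matrix (Fin N) (Fin N) ℂ ≃ₐ[ℂ] _),
    ← hasEigenvalue_iff_mem_spectrum] at hlam
  obtain ⟨v, hv, hv0⟩ := hlam.exists_hasEigenvector
  have heig : (A.map (Complex.ofReal ·)).mulVec v = lam • v := by
    have h := Module.End.mem_eigenspace_iff.mp hv
    rwa [Matrix.toLinAlgEquiv'_apply] at h
  have hne : v ≠ 0 := hv0
  obtain ⟨j0, hj0⟩ : ∃ j, v j ≠ 0 := by
    by_contra h; push_neg at h; exact hne (funext h)
  have hNpos : (Finset.univ : Finset (Fin N)).Nonempty := ⟨j0, Finset.mem_univ _⟩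
  obtain ⟨i, -, hi⟩ := Finset.exists_max_image Finset.univ (fun i => ‖v i‖ / x i) hNpos
  have hxi := hx i
  have hvi : 0 < ‖v i‖ := by
    have h1 : 0 < ‖v j0‖ / x j0 := div_pos (norm_pos_iff.mpr hj0) (hx j0)
    have h2 : 0 < ‖v i‖ / x i * x i :=
      mul_pos (lt_of_lt_of_le h1 (hi j0 (Finset.mem_univ _))) hxi
    rwa [div_mul_cancel₀ _ hxi.ne'] at h2
  have key : ∀ j, ‖v j‖ ≤ ‖v i‖ / x i * x j := fun j => by
    have h := hi j (Finset.mem_univ _)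
    calc ‖v j‖ = ‖v j‖ / x j * x j := (div_mul_cancel₀ _ (hx j).ne').symm
    _ ≤ ‖v i‖ / x i * x j := by gcongr; exact (hx j).le
  have hmv : ‖lam‖ * ‖v i‖ ≤ β * ‖v i‖ := by
    have h1 : (lam • v) i = lam * v i := rfl
    have h2 : ‖lam * v i‖ = ‖((A.map (Complex.ofReal ·)).mulVec v) i‖ := by rw [heig, h1]
    calc ‖lam‖ * ‖v i‖ = ‖lam * v i‖ := by rw [norm_mul]
    _ = ‖∑ j, (A i j : ℂ) * v j‖ := by
        rw [h2]; simp [Matrix.mulVec, dotProduct, Matrix.map_apply]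
    _ ≤ ∑ j, ‖(A i j : ℂ) * v j‖ := norm_sum_le _ _
    _ = ∑ j, A i j * ‖v j‖ := by
        simp only [norm_mul, Complex.norm_real, Real.norm_eq_abs]
        exact Finset.sum_congr rfl fun j _ => by rw [abs_of_nonneg (hA i j)]
    _ ≤ ∑ j, A i j * (‖v i‖ / x i * x j) := by
        apply Finset.sum_le_sum; intro j _; exact mul_le_mul_of_nonneg_left (key j) (hA i j)
    _ = ‖v i‖ / x i * ∑ j, A i j * x j := by
        rw [Finset.mul_sum]; exact Finset.sum_congr rfl fun j _ => by ring
    _ = ‖v i‖ / x i * (A.mulVec x i) := by simp [Matrix.mulVec, dotProduct]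
    _ ≤ ‖v i‖ / x i * (β * x i) := by
        apply mul_le_mul_of_nonneg_left (hAx i); positivity
    _ = β * ‖v i‖ := by field_simp
  exact le_of_mul_le_mul_right hmv hvi


section rows
variable {μ σ α Q mr Mr nr : ℝ}

lemma row1_aux (hμ : 0 < μ) (hα0 : 0 < α) (hQ0 : 0 < Q)
    (hs : 0 < 1 - σ ^ 2) (hs1 : 1 - σ ^ 2 ≤ 1)
    (hm0 : 0 < mr) (hmM : mr ≤ Mr)
    (hα2 : α * (Q * μ) * (320 * Mr * Q) ≤ mr * (1 - σ ^ 2) ^ 2)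
    (hμαs : μ * α * 320 ≤ 1 - σ ^ 2) :
    (1 + σ ^ 2) / 2 + 2 * α ^ 2 * (Q * μ) ^ 2 / (1 - σ ^ 2) *
      (8700 * Mr * Q ^ 2 / (mr * (1 - σ ^ 2) ^ 2)) ≤ 1 - μ * α / 4 := by
  have hM0 : 0 < Mr := lt_of_lt_of_le hm0 hmM
  have key : 2 * α ^ 2 * (Q * μ) ^ 2 / (1 - σ ^ 2) *
      (8700 * Mr * Q ^ 2 / (mr * (1 - σ ^ 2) ^ 2)) ≤ 17/100 * (1 - σ ^ 2) := by
    rw [div_mul_div_comm, div_le_iff₀ (by positivity)]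
    have hsq : (α * (Q * μ) * (320 * Mr * Q)) * (α * (Q * μ) * (320 * Mr * Q)) ≤
        (mr * (1 - σ ^ 2) ^ 2) * (mr * (1 - σ ^ 2) ^ 2) :=
      mul_le_mul hα2 hα2 (by positivity) (by positivity)
    have h1 : 17400 * (α^2 * (Q*μ)^2 * Mr * Q^2) * Mr * 102400 ≤
        17400 * (mr^2 * (1 - σ ^ 2) ^ 4) := by nlinarith [hsq]
    have h2 : mr^2 * (1-σ^2)^4 ≤ mr * Mr * (1-σ^2)^4 := by
      nlinarith [pow_pos hs 4, hmM, hm0]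
    have h3 : (17400 * (α^2 * (Q*μ)^2 * Mr * Q^2)) * Mr ≤ ((17/100) * (mr * (1-σ^2)^4)) * Mr := by
      nlinarith [h1, h2, hM0]
    have h4 : 17400 * (α^2 * (Q*μ)^2 * Mr * Q^2) ≤ (17/100) * (mr * (1-σ^2)^4) :=
      le_of_mul_le_mul_right h3 hM0
    nlinarith [h4]
  nlinarith [key, hμαs, hs]

lemma row2_aux (hμ : 0 < μ) (hα0 : 0 < α) (hQ0 : 0 < Q)
    (hm0 : 0 < mr) (hn1 : 1 ≤ nr)
    (hkey : 320 * (μ * α) * Mr * Q ^ 2 ≤ nr * mr) :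
    2 * (Q * μ) ^ 2 * α / μ + (1 - μ * α / 2) * (8.5 * Q ^ 2) +
      2 * (Q * μ) ^ 2 * α ^ 2 / nr * (20 * Mr * Q ^ 2 / mr) ≤
      (1 - μ * α / 4) * (8.5 * Q ^ 2) := by
  have hn0 : 0 < nr := lt_of_lt_of_le one_pos hn1
  have e1 : 2 * (Q * μ) ^ 2 * α / μ = 2 * Q ^ 2 * μ * α := by
    field_simp
  have key2 : 2 * (Q * μ) ^ 2 * α ^ 2 / nr * (20 * Mr * Q ^ 2 / mr) ≤ 1/8 * (μ * α) * Q ^ 2 := by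
    rw [div_mul_div_comm, div_le_iff₀ (by positivity)]
    nlinarith [mul_le_mul_of_nonneg_left hkey
      (by positivity : (0:ℝ) ≤ μ * α * Q ^ 2 / 8)]
  rw [e1]
  nlinarith [key2]

lemma row3_aux (hμ : 0 < μ) (hα0 : 0 < α) (hQsq : 1 ≤ Q ^ 2)
    (hm0 : 0 < mr) (hM1 : 1 ≤ Mr)
    (hα1 : μ * α * (5 * Mr) ≤ 1) :
    2 / mr + 2 / mr * (8.5 * Q ^ 2) + (1 - Mr⁻¹) * (20 * Mr * Q ^ 2 / mr) ≤
      (1 - μ * α / 4) * (20 * Mr * Q ^ 2 / mr) := by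
  have hM0 : (0:ℝ) < Mr := lt_of_lt_of_le one_pos hM1
  have eL : 2 / mr + 2 / mr * (8.5 * Q ^ 2) + (1 - Mr⁻¹) * (20 * Mr * Q ^ 2 / mr)
      = (2 + 17 * Q ^ 2 + (20 * Mr - 20) * Q ^ 2) / mr := by
    field_simp; ring
  have eR : (1 - μ * α / 4) * (20 * Mr * Q ^ 2 / mr)
      = ((1 - μ * α / 4) * (20 * Mr * Q ^ 2)) / mr := by ring
  rw [eL, eR, div_le_div_iff₀ hm0 hm0]
  nlinarith [mul_le_mul_of_nonneg_right hα1 (sq_nonneg Q), hQsq, hm0]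

lemma row4_aux (hμ : 0 < μ) (hα0 : 0 < α) (hQ0 : 0 < Q) (hQsq : 1 ≤ Q ^ 2)
    (hs : 0 < 1 - σ ^ 2) (hs1 : 1 - σ ^ 2 ≤ 1)
    (hm0 : 0 < mr) (hmM : mr ≤ Mr)
    (hα2 : α * (Q * μ) * (320 * Mr * Q) ≤ mr * (1 - σ ^ 2) ^ 2) :
    104 / (1 - σ ^ 2) + 71 / (1 - σ ^ 2) * (8.5 * Q ^ 2) +
      19 / (1 - σ ^ 2) * (20 * Mr * Q ^ 2 / mr) +
      (3 + σ ^ 2) / 4 * (8700 * Mr * Q ^ 2 / (mr * (1 - σ ^ 2) ^ 2)) ≤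
      (1 - μ * α / 4) * (8700 * Mr * Q ^ 2 / (mr * (1 - σ ^ 2) ^ 2)) := by
  have hM0 : 0 < Mr := lt_of_lt_of_le hm0 hmM
  have eL : 104 / (1 - σ ^ 2) + 71 / (1 - σ ^ 2) * (8.5 * Q ^ 2) +
      19 / (1 - σ ^ 2) * (20 * Mr * Q ^ 2 / mr) +
      (3 + σ ^ 2) / 4 * (8700 * Mr * Q ^ 2 / (mr * (1 - σ ^ 2) ^ 2))
      = (104 * mr * (1-σ^2) + 603.5 * mr * Q^2 * (1-σ^2) + 380 * Mr * Q^2 * (1-σ^2)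
          + (3 + σ^2) * 2175 * Mr * Q^2) / (mr * (1 - σ ^ 2) ^ 2) := by
    field_simp; ring
  have eR : (1 - μ * α / 4) * (8700 * Mr * Q ^ 2 / (mr * (1 - σ ^ 2) ^ 2))
      = ((1 - μ * α / 4) * (8700 * Mr * Q ^ 2)) / (mr * (1 - σ ^ 2) ^ 2) := by ring
  rw [eL, eR, div_le_div_iff_of_pos_right (by positivity)]
  have ha : 2175 * (μ * α) * Mr * Q ^ 2 ≤ (2175/320) * (mr * (1-σ^2)^2) := by nlinarith [hα2]
  have t3 : (1-σ^2)^2 ≤ 1-σ^2 := by nlinarith [hs, hs1]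
  have hb : mr * (1-σ^2)^2 ≤ mr * (1-σ^2) := mul_le_mul_of_nonneg_left t3 hm0.le
  have hMrQ : mr ≤ Mr * Q^2 := by nlinarith [hmM, hQsq, hM0]
  have hc : mr * (1-σ^2) ≤ Mr * Q^2 * (1-σ^2) := mul_le_mul_of_nonneg_right hMrQ hs.le
  have hd : mr * Q^2 * (1-σ^2) ≤ Mr * Q^2 * (1-σ^2) :=
    mul_le_mul_of_nonneg_right (mul_le_mul_of_nonneg_right hmM (sq_nonneg Q)) hs.le
  have he : (0:ℝ) ≤ Mr * Q^2 * (1-σ^2) := by positivity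
  nlinarith [ha, hb, hc, hd, he]

end rows

/-- The system matrix `G_α` governing GT-SAGA. -/
noncomputable def GTSAGAMatrix (μ L σ α : ℝ) (m M n : ℕ) : Matrix (Fin 4) (Fin 4) ℝ :=
  !![(1 + σ ^ 2) / 2, 0, 0, 2 * α ^ 2 * L ^ 2 / (1 - σ ^ 2);
     2 * L ^ 2 * α / μ, 1 - μ * α / 2, 2 * L ^ 2 * α ^ 2 / n, 0;
     2 / m, 2 / m, 1 - 1 / M, 0;
     104 / (1 - σ ^ 2), 71 / (1 - σ ^ 2), 19 / (1 - σ ^ 2), (3 + σ ^ 2) / 4]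

/-- Entrywise bound `G_α ε ≤ (1 - μα/4) ε`. -/
lemma gtsaga_mulVec_le (μ L σ α Q : ℝ) (m M n : ℕ)
    (hμ : 0 < μ) (hμL : μ ≤ L) (hQ : Q = L / μ)
    (hσ0 : 0 ≤ σ) (hσ1 : σ < 1)
    (hm : 1 ≤ m) (hmM : m ≤ M) (hn : 1 ≤ n)
    (hα0 : 0 < α)
    (hα : α ≤ min (1 / (5 * μ * (M:ℝ))) ((m : ℝ) * (1 - σ ^ 2) ^ 2 / (320 * (M:ℝ) * L * Q))) :
    (GTSAGAMatrix μ L σ α m M n).mulVec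
        ![1, 8.5 * Q ^ 2, 20 * (M:ℝ) * Q ^ 2 / m, 8700 * (M:ℝ) * Q ^ 2 / ((m:ℝ) * (1 - σ ^ 2) ^ 2)] ≤
      (1 - μ * α / 4) •
        ![1, 8.5 * Q ^ 2, 20 * (M:ℝ) * Q ^ 2 / m, 8700 * (M:ℝ) * Q ^ 2 / ((m:ℝ) * (1 - σ ^ 2) ^ 2)] := by
  -- basic facts
  have hL : 0 < L := lt_of_lt_of_le hμ hμL
  have hQ1 : 1 ≤ Q := by rw [hQ]; exact (one_le_div hμ).mpr hμL
  have hQ0 : 0 < Q := lt_of_lt_of_le one_pos hQ1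
  have hQsq : 1 ≤ Q ^ 2 := by nlinarith
  have hs : 0 < 1 - σ ^ 2 := by nlinarith
  have hs1 : 1 - σ ^ 2 ≤ 1 := by nlinarith
  have hm1 : (1:ℝ) ≤ m := by exact_mod_cast hm
  have hm0 : (0:ℝ) < m := lt_of_lt_of_le one_pos hm1
  have hM1 : (1:ℝ) ≤ M := by exact_mod_cast hm.trans hmM
  have hM0 : (0:ℝ) < M := lt_of_lt_of_le one_pos hM1
  have hmM' : (m:ℝ) ≤ M := by exact_mod_cast hmM
  have hn1 : (1:ℝ) ≤ n := by exact_mod_cast hn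
  have hn0 : (0:ℝ) < n := lt_of_lt_of_le one_pos hn1
  have hLQ : L = Q * μ := by rw [hQ]; field_simp
  have hα1 : μ * α * (5 * (M:ℝ)) ≤ 1 := by
    have h := hα.trans (min_le_left _ _)
    have := (le_div_iff₀ (by positivity : (0:ℝ) < 5 * μ * M)).mp h
    linarith
  have hα2 : α * (Q * μ) * (320 * (M:ℝ) * Q) ≤ m * (1 - σ ^ 2) ^ 2 := by
    have h := hα.trans (min_le_right _ _)
    have h2 := (le_div_iff₀ (by positivity : (0:ℝ) < 320 * M * L * Q)).mp h
    rw [hLQ] at h2; linarith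
  have hμαs : μ * α * 320 ≤ 1 - σ ^ 2 := by
    have hMQ : (m:ℝ) ≤ M * Q := by nlinarith
    have t1 : 320 * (μ * α) * (m:ℝ) ≤ 320 * (μ * α) * ((M:ℝ) * Q) := by
      have := mul_le_mul_of_nonneg_left hMQ (by positivity : (0:ℝ) ≤ 320 * (μ * α))
      linarith
    have t2 : 320 * (μ * α) * ((M:ℝ) * Q) ≤ (m:ℝ) * (1 - σ ^ 2) ^ 2 := by
      have ht : 320 * (μ * α) * ((M:ℝ) * Q) ≤ 320 * (μ * α) * ((M:ℝ) * Q) * Q :=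
        le_mul_of_one_le_right (by positivity) hQ1
      nlinarith [hα2, ht]
    have t3 : (1 - σ ^ 2) ^ 2 ≤ 1 - σ ^ 2 := by nlinarith [hs, hs1]
    have t4 : (m:ℝ) * (1 - σ ^ 2) ^ 2 ≤ (m:ℝ) * (1 - σ ^ 2) :=
      mul_le_mul_of_nonneg_left t3 hm0.le
    have t5 : (μ * α * 320) * (m:ℝ) ≤ (1 - σ ^ 2) * (m:ℝ) := by linarith [t1.trans t2, t4]
    exact le_of_mul_le_mul_right t5 hm0
  have hkey : 320 * (μ * α) * (M:ℝ) * Q ^ 2 ≤ (n:ℝ) * m := by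
    have t3 : (1 - σ ^ 2) ^ 2 ≤ 1 := by nlinarith [hs, hs1]
    have t4 : (m:ℝ) * (1 - σ ^ 2) ^ 2 ≤ (m:ℝ) * 1 := mul_le_mul_of_nonneg_left t3 hm0.le
    have t5 : (m:ℝ) ≤ (n:ℝ) * m := le_mul_of_one_le_left hm0.le hn1
    nlinarith [hα2]
  -- Part 1: entrywise inequality
  have part1 : (GTSAGAMatrix μ L σ α m M n).mulVec
      ![1, 8.5 * Q ^ 2, 20 * (M:ℝ) * Q ^ 2 / m, 8700 * (M:ℝ) * Q ^ 2 / ((m:ℝ) * (1 - σ ^ 2) ^ 2)] ≤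
      (1 - μ * α / 4) •
      ![1, 8.5 * Q ^ 2, 20 * (M:ℝ) * Q ^ 2 / m, 8700 * (M:ℝ) * Q ^ 2 / ((m:ℝ) * (1 - σ ^ 2) ^ 2)] := by
    rw [Pi.le_def]
    intro i
    fin_cases i <;>
      simp [GTSAGAMatrix, Matrix.mulVec, dotProduct, Fin.sum_univ_four]
    · have h := row1_aux hμ hα0 hQ0 hs hs1 hm0 hmM' hα2 hμαs
      rw [hLQ]; linarith [h]
    · have h := row2_aux (Mr := (M:ℝ)) hμ hα0 hQ0 hm0 hn1 hkey
      rw [hLQ]; linarith [h]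
    · have h := row3_aux hμ hα0 hQsq hm0 hM1 hα1
      linarith [h]
    · have h := row4_aux hμ hα0 hQ0 hQsq hs hs1 hm0 hmM' hα2
      linarith [h]
  exact part1

/-- Nonnegativity of the entries of `G_α`. -/
lemma gtsaga_entries_nonneg (μ L σ α : ℝ) (m M n : ℕ)
    (hμ : 0 < μ) (hα0 : 0 < α) (hs : 0 < 1 - σ ^ 2)
    (hM1 : (1:ℝ) ≤ M) (hμα : μ * α ≤ 2) :
    ∀ i j, 0 ≤ GTSAGAMatrix μ L σ α m M n i j := by
  have hM0 : (0:ℝ) < M := lt_of_lt_of_le one_pos hM1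
  have hMinv : 1 / (M:ℝ) ≤ 1 := by
    rw [div_le_one hM0]; exact hM1
  have hMinv2 : ((M:ℝ))⁻¹ ≤ 1 := by rw [← one_div]; exact hMinv
  intro i j
  fin_cases i <;> fin_cases j <;>
    simp [GTSAGAMatrix] <;>
    first
    | positivity
    | linarith
    | exact div_nonneg (by positivity) hs.le
    | exact div_nonneg (by positivity) hμ.le

/-- Spectral radius bound for the GT-SAGA system matrix: for
`0 < α ≤ min{1/(5μM), m(1−σ²)²/(320MLQ)}` the positive vector
`ε = (1, 8.5Q², 20MQ²/m, 8700MQ²/(m(1−σ²)²))` satisfies `G_α ε ≤ (1 − μα/4) ε`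
entrywise, hence `ρ(G_α) ≤ 1 − μα/4`; for `α` equal to the upper bound,
`ρ(G_α) ≤ 1 − min{1/(20M), m(1−σ²)²/(1280MQ²)}`. -/
theorem gtsaga_spectral_bound (μ L σ α Q : ℝ) (m M n : ℕ)
    (hμ : 0 < μ) (hμL : μ ≤ L) (hQ : Q = L / μ)
    (hσ0 : 0 ≤ σ) (hσ1 : σ < 1)
    (hm : 1 ≤ m) (hmM : m ≤ M) (hn : 1 ≤ n)
    (hα0 : 0 < α)
    (hα : α ≤ min (1 / (5 * μ * (M:ℝ))) ((m : ℝ) * (1 - σ ^ 2) ^ 2 / (320 * (M:ℝ) * L * Q))) :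
    (GTSAGAMatrix μ L σ α m M n).mulVec
        ![1, 8.5 * Q ^ 2, 20 * (M:ℝ) * Q ^ 2 / m, 8700 * (M:ℝ) * Q ^ 2 / ((m:ℝ) * (1 - σ ^ 2) ^ 2)] ≤
      (1 - μ * α / 4) •
        ![1, 8.5 * Q ^ 2, 20 * (M:ℝ) * Q ^ 2 / m, 8700 * (M:ℝ) * Q ^ 2 / ((m:ℝ) * (1 - σ ^ 2) ^ 2)] ∧
    (∀ lam ∈ spectrum ℂ ((GTSAGAMatrix μ L σ α m M n).map (Complex.ofReal ·)),
        ‖lam‖ ≤ 1 - μ * α / 4) ∧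
    (α = min (1 / (5 * μ * (M:ℝ))) ((m : ℝ) * (1 - σ ^ 2) ^ 2 / (320 * (M:ℝ) * L * Q)) →
      ∀ lam ∈ spectrum ℂ ((GTSAGAMatrix μ L σ α m M n).map (Complex.ofReal ·)),
        ‖lam‖ ≤ 1 - min (1 / (20 * (M:ℝ))) ((m : ℝ) * (1 - σ ^ 2) ^ 2 / (1280 * (M:ℝ) * Q ^ 2))) := by
  have hL : 0 < L := lt_of_lt_of_le hμ hμL
  have hQ1 : 1 ≤ Q := by rw [hQ]; exact (one_le_div hμ).mpr hμL
  have hQ0 : 0 < Q := lt_of_lt_of_le one_pos hQ1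
  have hs : 0 < 1 - σ ^ 2 := by nlinarith
  have hm1 : (1:ℝ) ≤ m := by exact_mod_cast hm
  have hm0 : (0:ℝ) < m := lt_of_lt_of_le one_pos hm1
  have hM1 : (1:ℝ) ≤ M := by exact_mod_cast hm.trans hmM
  have hM0 : (0:ℝ) < M := lt_of_lt_of_le one_pos hM1
  have hLQ : L = Q * μ := by rw [hQ]; field_simp
  have hμα : μ * α ≤ 2 := by
    have h := hα.trans (min_le_left _ _)
    have h2 := (le_div_iff₀ (by positivity : (0:ℝ) < 5 * μ * M)).mp h
    nlinarith [mul_pos hμ hα0, hM1]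
  have part1 := gtsaga_mulVec_le μ L σ α Q m M n hμ hμL hQ hσ0 hσ1 hm hmM hn hα0 hα
  set x : Fin 4 → ℝ :=
    ![1, 8.5 * Q ^ 2, 20 * (M:ℝ) * Q ^ 2 / m, 8700 * (M:ℝ) * Q ^ 2 / ((m:ℝ) * (1 - σ ^ 2) ^ 2)]
    with hx_def
  have hx : ∀ i, 0 < x i := by
    intro i
    fin_cases i
    · norm_num [hx_def]
    · show (0:ℝ) < 8.5 * Q ^ 2
      nlinarith [pow_pos hQ0 2]
    · show (0:ℝ) < 20 * (M:ℝ) * Q ^ 2 / m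
      exact div_pos (by positivity) hm0
    · show (0:ℝ) < 8700 * (M:ℝ) * Q ^ 2 / ((m:ℝ) * (1 - σ ^ 2) ^ 2)
      exact div_pos (by positivity) (by positivity)
  have part2 : ∀ lam ∈ spectrum ℂ ((GTSAGAMatrix μ L σ α m M n).map (Complex.ofReal ·)),
      ‖lam‖ ≤ 1 - μ * α / 4 := by
    apply perron_bound' _ x _
      (gtsaga_entries_nonneg μ L σ α m M n hμ hα0 hs hM1 hμα) hx
    intro i
    have := part1 i
    simpa using this
  refine ⟨part1, part2, ?_⟩
  intro hmin lam hlam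
  have hc : 1 / (20 * (M:ℝ)) = μ * (1 / (5 * μ * (M:ℝ))) / 4 := by
    field_simp; ring
  have hd : (m:ℝ) * (1 - σ ^ 2) ^ 2 / (1280 * (M:ℝ) * Q ^ 2)
      = μ * ((m:ℝ) * (1 - σ ^ 2) ^ 2 / (320 * (M:ℝ) * L * Q)) / 4 := by
    rw [hLQ]; field_simp; ring
  have hmin4 : min (1 / (20 * (M:ℝ))) ((m:ℝ) * (1 - σ ^ 2) ^ 2 / (1280 * (M:ℝ) * Q ^ 2))
      = μ * α / 4 := by
    rw [hmin, hc, hd]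
    rcases le_total (1 / (5 * μ * (M:ℝ)))
      ((m:ℝ) * (1 - σ ^ 2) ^ 2 / (320 * (M:ℝ) * L * Q)) with h | h
    · rw [min_eq_left h, min_eq_left (by gcongr)]
    · rw [min_eq_right h, min_eq_right (by gcongr)]
  rw [hmin4]
  exact part2 lam hlam
end
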